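/- Let P : C^op → Pos be a slat-doctrine over a category C with finite products such that each fibre P(X) has binary joins and each reindexing P_f preserves them. Then each fibre P^un(A) of the universal completion has binary joins, given by (A,B,β) ∨ (A,C,γ) = (A, B×C, P_{⟨pr_A,pr_B⟩}(β) ∨ P_{⟨pr_A,pr_C⟩}(γ)); that is, this element is a least upper bound of (A,B,β) and (A,C,γ) in P^un(A). -/

import Mathlib

open CategoryTheory CategoryTheory.Limits Opposite

universe u v

variable {C : Type u} [Category.{v} C] [HasFiniteProducts C]

/-- The fibre of a slat-doctrine `P : Cᵒᵖ ⥤ Pos` over an object `X` of `C`. -/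
abbrev Fib (P : Cᵒᵖ ⥤ PartOrd) (X : C) : Type _ := (P.obj (op X) : Type _)

/-- Reindexing along `f : X ⟶ Y` (the monotone map `P f : P Y → P X`). -/
def rIdx (P : Cᵒᵖ ⥤ PartOrd) {X Y : C} (f : X ⟶ Y) (a : Fib P Y) : Fib P X :=
  (P.map f.op).hom.toFun a

/-- Objects of the fibre of a quantifier completion over `A`: triples `(A, B, α)`
with `α ∈ P (A × B)` (the component `A` being fixed). -/
abbrev QObj (P : Cᵒᵖ ⥤ PartOrd) (A : C) : Type _ := Σ B : C, Fib P (A ⨯ B)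

/-- The order of the universal completion `P^un`:
`(A,B,α) ≤ (A,C,γ)` iff there is `g : A×C ⟶ B` with `P⟨pr_A,g⟩(α) ≤ γ`. -/
def UnLe (P : Cᵒᵖ ⥤ PartOrd) {A : C} (x y : QObj P A) : Prop :=
  ∃ g : A ⨯ y.1 ⟶ x.1, rIdx P (prod.lift prod.fst g) x.2 ≤ y.2

/-- The order of the existential completion `P^ex`:
`(A,B,α) ≤ (A,C,γ)` iff there is `f : A×B ⟶ C` with `α ≤ P⟨pr_A,f⟩(γ)`. -/
def ExLe (P : Cᵒᵖ ⥤ PartOrd) {A : C} (x y : QObj P A) : Prop :=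
  ∃ f : A ⨯ x.1 ⟶ y.1, x.2 ≤ rIdx P (prod.lift prod.fst f) y.2

/-- Reindexing of the completions along `f : X ⟶ Y`: `(Y,D,δ) ↦ (X,D,P_{f×1}(δ))`. -/
noncomputable def QReindex (P : Cᵒᵖ ⥤ PartOrd) {X Y : C} (f : X ⟶ Y) (y : QObj P Y) :
    QObj P X :=
  ⟨y.1, rIdx P (prod.map f (𝟙 y.1)) y.2⟩

/-- The candidate binary join in `P^un(A)`:
`(A,B,β) ∨ (A,C,γ) = (A, B×C, P⟨pr_A,pr_B⟩(β) ∨ P⟨pr_A,pr_C⟩(γ))`. -/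
noncomputable def unJoin (P : Cᵒᵖ ⥤ PartOrd)
    (sup : ∀ X : C, Fib P X → Fib P X → Fib P X) {A : C} (x y : QObj P A) : QObj P A :=
  ⟨x.1 ⨯ y.1,
    sup (A ⨯ (x.1 ⨯ y.1))
      (rIdx P (prod.lift prod.fst (prod.snd ≫ prod.fst)) x.2)
      (rIdx P (prod.lift prod.fst (prod.snd ≫ prod.snd)) y.2)⟩

theorem prod.lift_lift_comp_lift_snd_fst {E : Type*} [Category E]
    [HasBinaryProducts E] {W A B D : E} (f : W ⟶ A) (g₁ : W ⟶ B) (g₂ : W ⟶ D) :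
    prod.lift f (prod.lift g₁ g₂) ≫ prod.lift prod.fst (prod.snd ≫ prod.fst) = prod.lift f g₁ := by
  ext <;> simp only [prod.comp_lift, prod.lift_fst, prod.lift_snd, prod.lift_snd_assoc]

theorem prod.lift_lift_comp_lift_snd_snd {E : Type*} [Category E]
    [HasBinaryProducts E] {W A B D : E} (f : W ⟶ A) (g₁ : W ⟶ B) (g₂ : W ⟶ D) :
    prod.lift f (prod.lift g₁ g₂) ≫ prod.lift prod.fst (prod.snd ≫ prod.snd) = prod.lift f g₂ := by
  ext <;> simp only [prod.comp_lift, prod.lift_fst, prod.lift_snd, prod.lift_snd_assoc]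

theorem rIdx_comp {E : Type*} [Category E] (P : Eᵒᵖ ⥤ PartOrd) {X Y Z : E} (f : X ⟶ Y)
    (g : Y ⟶ Z) (a : Fib P Z) :
    rIdx P (f ≫ g) a = rIdx P f (rIdx P g a) := by
  simp [rIdx]

section

variable (P : Cᵒᵖ ⥤ PartOrd) (sup : ∀ X : C, Fib P X → Fib P X → Fib P X)

theorem unLe_unJoin_left (le_sup_left : ∀ (X : C) (a b : Fib P X), a ≤ sup X a b) {A : C}
    (x y : QObj P A) : UnLe P x (unJoin P sup x y) :=
  ⟨prod.snd ≫ prod.fst, le_sup_left _ _ _⟩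

theorem unLe_unJoin_right (le_sup_right : ∀ (X : C) (a b : Fib P X), b ≤ sup X a b) {A : C}
    (x y : QObj P A) : UnLe P y (unJoin P sup x y) :=
  ⟨prod.snd ≫ prod.snd, le_sup_right _ _ _⟩

/-- The mediating map is the pairing `⟨g₁, g₂⟩ : A × z.1 ⟶ B × D` of the two witnesses; reindexing
along it distributes over the join, and each half collapses back to one of the witnesses. -/
theorem unJoin_unLe (sup_le : ∀ (X : C) (a b c : Fib P X), a ≤ c → b ≤ c → sup X a b ≤ c)
    (hpres : ∀ {X Y : C} (f : X ⟶ Y) (a b : Fib P Y),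
      rIdx P f (sup Y a b) = sup X (rIdx P f a) (rIdx P f b))
    {A : C} {x y z : QObj P A} (hx : UnLe P x z) (hy : UnLe P y z) :
    UnLe P (unJoin P sup x y) z := by
  obtain ⟨B, β⟩ := x
  obtain ⟨D, δ⟩ := y
  obtain ⟨g₁, h₁⟩ := hx
  obtain ⟨g₂, h₂⟩ := hy
  refine ⟨prod.lift g₁ g₂, ?_⟩
  dsimp only [unJoin]
  rw [hpres]
  apply sup_le
  · rwa [← rIdx_comp, prod.lift_lift_comp_lift_snd_fst]
  · rwa [← rIdx_comp, prod.lift_lift_comp_lift_snd_snd]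

end

/-- If each fibre of `P` has binary joins preserved by reindexing, then each fibre of the
universal completion has binary joins, given by `unJoin` (a least upper bound). -/
theorem unCompletion_binary_joins (P : Cᵒᵖ ⥤ PartOrd)
    (sup : ∀ X : C, Fib P X → Fib P X → Fib P X)
    (le_sup_left : ∀ (X : C) (a b : Fib P X), a ≤ sup X a b)
    (le_sup_right : ∀ (X : C) (a b : Fib P X), b ≤ sup X a b)
    (sup_le : ∀ (X : C) (a b c : Fib P X), a ≤ c → b ≤ c → sup X a b ≤ c)
    (hpres : ∀ {X Y : C} (f : X ⟶ Y) (a b : Fib P Y),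
      rIdx P f (sup Y a b) = sup X (rIdx P f a) (rIdx P f b))
    (A : C) (x y : QObj P A) :
    UnLe P x (unJoin P sup x y) ∧ UnLe P y (unJoin P sup x y) ∧
      ∀ z : QObj P A, UnLe P x z → UnLe P y z → UnLe P (unJoin P sup x y) z :=
  ⟨unLe_unJoin_left P sup le_sup_left x y, unLe_unJoin_right P sup le_sup_right x y,
    fun _ => unJoin_unLe P sup sup_le hpres⟩
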